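/- arXiv:2204.07706 — 4 statements merged into one kernel-verified Lean document; each statement's English description precedes it below -/
import Mathlib

section
/- Let N ≥ 2, 𝒟 ⊆ {0,…,N−1}², and for i ∈ 𝒟 define φ_i(x) = (x + i)/N on ℝ². For n ≥ 1 and a word 𝐢 = i₁⋯i_n ∈ 𝒟ⁿ, let φ_𝐢 = φ_{i₁} ∘ ⋯ ∘ φ_{i_n}. If F is the attractor of the IFS {φ_i : i ∈ 𝒟}, then for any word 𝐣 ∈ 𝒟ⁿ with 𝐣 ≠ 𝐢, the sets φ_𝐣(F) and φ_{𝐢𝐢}(F) are disjoint, where 𝐢𝐢 denotes the concatenation of 𝐢 with itself. -/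
/-- The map φ_d(x) = (x + d)/N on ℝ². -/
noncomputable def phi (N : ℕ) (d : ℕ × ℕ) (x : ℝ × ℝ) : ℝ × ℝ :=
  ((x.1 + d.1) / N, (x.2 + d.2) / N)

/-- φ_{i₁⋯iₙ} = φ_{i₁} ∘ ⋯ ∘ φ_{iₙ}. -/
noncomputable def phiWord (N : ℕ) (w : List (ℕ × ℕ)) : (ℝ × ℝ) → (ℝ × ℝ) :=
  w.foldr (fun d f => phi N d ∘ f) id

/-- The base-N value of a digit word (head = most significant). -/
def valN (N : ℕ) : List ℕ → ℕ
  | [] => 0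
  | d :: w => d * N ^ w.length + valN N w

lemma valN_lt (N : ℕ) : ∀ (w : List ℕ), (∀ d ∈ w, d < N) → valN N w < N ^ w.length
  | [], _ => by simp [valN]
  | d :: w, h => by
    have hd : d < N := h d (by simp)
    have ih := valN_lt N w (fun e he => h e (by simp [he]))
    have hNpos : 0 < N ^ w.length := pow_pos (by omega) _
    calc d * N ^ w.length + valN N w < d * N ^ w.length + N ^ w.length := by omega
      _ = (d + 1) * N ^ w.length := by ring
      _ ≤ N * N ^ w.length := Nat.mul_le_mul_right _ hd
      _ = N ^ (d :: w).length := by rw [List.length_cons]; ring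

lemma valN_append (N : ℕ) : ∀ (u v : List ℕ),
    valN N (u ++ v) = valN N u * N ^ v.length + valN N v
  | [], v => by simp [valN]
  | d :: u, v => by
    have ih := valN_append N u v
    show d * N ^ (u ++ v).length + valN N (u ++ v)
      = (d * N ^ u.length + valN N u) * N ^ v.length + valN N v
    rw [ih, List.length_append, pow_add]
    ring

lemma digit_unique (K d d' v v' : ℕ) (hv : v < K) (hv' : v' < K)
    (h : d * K + v = d' * K + v') : d = d' ∧ v = v' := by
  rcases lt_trichotomy d d' with h' | h' | h'
  · exfalso
    have : (d + 1) * K ≤ d' * K := Nat.mul_le_mul_right _ h'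
    nlinarith
  · subst h'
    exact ⟨rfl, Nat.add_left_cancel h⟩
  · exfalso
    have : (d' + 1) * K ≤ d * K := Nat.mul_le_mul_right _ h'
    nlinarith

lemma words_eq (N : ℕ) : ∀ (w w' : List (ℕ × ℕ)), w.length = w'.length →
    (∀ d ∈ w, d.1 < N ∧ d.2 < N) → (∀ d ∈ w', d.1 < N ∧ d.2 < N) →
    valN N (w.map Prod.fst) = valN N (w'.map Prod.fst) →
    valN N (w.map Prod.snd) = valN N (w'.map Prod.snd) → w = w'
  | [], [], _, _, _, _, _ => rfl
  | [], d' :: w', hlen, _, _, _, _ => by simp at hlen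
  | d :: w, [], hlen, _, _, _, _ => by simp at hlen
  | d :: w, d' :: w', hlen, hw, hw', h1, h2 => by
    simp only [List.length_cons] at hlen
    have hlen' : w.length = w'.length := by omega
    simp only [List.map_cons, valN, List.length_map, hlen'] at h1 h2
    have hv1 := valN_lt N (w.map Prod.fst) (by
      intro e he; obtain ⟨p, hp, rfl⟩ := List.mem_map.mp he; exact (hw p (by simp [hp])).1)
    have hv1' := valN_lt N (w'.map Prod.fst) (by
      intro e he; obtain ⟨p, hp, rfl⟩ := List.mem_map.mp he; exact (hw' p (by simp [hp])).1)
    have hv2 := valN_lt N (w.map Prod.snd) (by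
      intro e he; obtain ⟨p, hp, rfl⟩ := List.mem_map.mp he; exact (hw p (by simp [hp])).2)
    have hv2' := valN_lt N (w'.map Prod.snd) (by
      intro e he; obtain ⟨p, hp, rfl⟩ := List.mem_map.mp he; exact (hw' p (by simp [hp])).2)
    rw [List.length_map] at hv1 hv1' hv2 hv2'
    rw [hlen'] at hv1 hv2
    obtain ⟨ha1, hb1⟩ := digit_unique _ _ _ _ _ hv1 hv1' h1
    obtain ⟨ha2, hb2⟩ := digit_unique _ _ _ _ _ hv2 hv2' h2
    have hd : d = d' := Prod.ext ha1 ha2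
    have hww : w = w' := words_eq N w w' hlen'
      (fun e he => hw e (by simp [he])) (fun e he => hw' e (by simp [he])) hb1 hb2
    rw [hd, hww]

lemma phiWord_apply (N : ℕ) (hN : (N : ℝ) ≠ 0) : ∀ (w : List (ℕ × ℕ)) (x : ℝ × ℝ),
    phiWord N w x = ((x.1 + valN N (w.map Prod.fst)) / N ^ w.length,
                     (x.2 + valN N (w.map Prod.snd)) / N ^ w.length)
  | [], x => by simp [phiWord, valN]
  | d :: w, x => by
    have ih := phiWord_apply N hN w x
    have hstep : phiWord N (d :: w) x = phi N d (phiWord N w x) := rfl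
    rw [hstep, ih]
    simp only [phi, List.map_cons, valN, List.length_cons, List.length_map, Prod.mk.injEq]
    have hpow : (N : ℝ) ^ w.length ≠ 0 := pow_ne_zero _ hN
    constructor <;> (push_cast; field_simp; ring)

/-- Every point of the attractor lies in the unit square. -/
lemma F_bound (N : ℕ) (hN : 2 ≤ N) (D : Finset (ℕ × ℕ))
    (hD : ∀ d ∈ D, d.1 < N ∧ d.2 < N)
    (F : Set (ℝ × ℝ)) (hFne : F.Nonempty) (hFc : IsCompact F)
    (hFattr : F = ⋃ d ∈ D, phi N d '' F) :
    ∀ x ∈ F, 0 ≤ x.1 ∧ x.1 ≤ 1 ∧ 0 ≤ x.2 ∧ x.2 ≤ 1 := by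
  have hNR : (2 : ℝ) ≤ N := by exact_mod_cast hN
  have hNne : (N : ℝ) ≠ 0 := by positivity
  have decomp : ∀ z ∈ F, ∃ d ∈ D, ∃ y ∈ F, phi N d y = z := by
    intro z hz
    rw [hFattr] at hz
    simp only [Set.mem_iUnion, Set.mem_image] at hz
    obtain ⟨d, hd, y, hy, hyz⟩ := hz
    exact ⟨d, hd, y, hy, hyz⟩
  have max1 : ∀ x ∈ F, x.1 ≤ 1 := by
    obtain ⟨z, hzF, hz⟩ := hFc.exists_isMaxOn hFne (continuous_fst.continuousOn)
    obtain ⟨d, hd, y, hy, hyz⟩ := decomp z hzF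
    have h1 : y.1 ≤ z.1 := hz hy
    have h2 : (d.1 : ℝ) + 1 ≤ N := by exact_mod_cast (hD d hd).1
    have hz1 : z.1 * N = y.1 + d.1 := by
      rw [← hyz]; show ((y.1 + d.1) / N) * N = _; field_simp
    have hzle : z.1 ≤ 1 := by nlinarith
    exact fun x hx => le_trans (hz hx) hzle
  have min1 : ∀ x ∈ F, 0 ≤ x.1 := by
    obtain ⟨z, hzF, hz⟩ := hFc.exists_isMinOn hFne (continuous_fst.continuousOn)
    obtain ⟨d, hd, y, hy, hyz⟩ := decomp z hzF
    have h1 : z.1 ≤ y.1 := hz hy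
    have hd0 : (0 : ℝ) ≤ d.1 := Nat.cast_nonneg _
    have hz1 : z.1 * N = y.1 + d.1 := by
      rw [← hyz]; show ((y.1 + d.1) / N) * N = _; field_simp
    have hzge : 0 ≤ z.1 := by nlinarith
    exact fun x hx => le_trans hzge (hz hx)
  have max2 : ∀ x ∈ F, x.2 ≤ 1 := by
    obtain ⟨z, hzF, hz⟩ := hFc.exists_isMaxOn hFne (continuous_snd.continuousOn)
    obtain ⟨d, hd, y, hy, hyz⟩ := decomp z hzF
    have h1 : y.2 ≤ z.2 := hz hy
    have h2 : (d.2 : ℝ) + 1 ≤ N := by exact_mod_cast (hD d hd).2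
    have hz1 : z.2 * N = y.2 + d.2 := by
      rw [← hyz]; show ((y.2 + d.2) / N) * N = _; field_simp
    have hzle : z.2 ≤ 1 := by nlinarith
    exact fun x hx => le_trans (hz hx) hzle
  have min2 : ∀ x ∈ F, 0 ≤ x.2 := by
    obtain ⟨z, hzF, hz⟩ := hFc.exists_isMinOn hFne (continuous_snd.continuousOn)
    obtain ⟨d, hd, y, hy, hyz⟩ := decomp z hzF
    have h1 : z.2 ≤ y.2 := hz hy
    have hd0 : (0 : ℝ) ≤ d.2 := Nat.cast_nonneg _
    have hz1 : z.2 * N = y.2 + d.2 := by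
      rw [← hyz]; show ((y.2 + d.2) / N) * N = _; field_simp
    have hzge : 0 ≤ z.2 := by nlinarith
    exact fun x hx => le_trans hzge (hz hx)
  exact fun x hx => ⟨min1 x hx, max1 x hx, min2 x hx, max2 x hx⟩

/-- Key 1-D arithmetic fact: the level-n interval of a word J with value b is
disjoint from the level-2n interval of the doubled word with value m(Nⁿ+1), if b ≠ m. -/
lemma key (N n : ℕ) (hN : 2 ≤ N) (b m : ℕ) (hb : b < N ^ n) (hm : m < N ^ n)
    (hbm : b ≠ m) (x y : ℝ) (hx0 : 0 ≤ x) (hx1 : x ≤ 1) (hy0 : 0 ≤ y) (hy1 : y ≤ 1) :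
    (x + b) / (N : ℝ) ^ n ≠ (y + (m * N ^ n + m : ℕ)) / (N : ℝ) ^ (n + n) := by
  intro h
  set P : ℝ := (N : ℝ) ^ n with hP
  have hNR : (2 : ℝ) ≤ N := by exact_mod_cast hN
  have hP1 : (1 : ℝ) ≤ P := one_le_pow₀ (by linarith)
  have hP0 : (0 : ℝ) < P := by linarith
  have heq : (x + b) * P = y + ((m : ℝ) * P + m) := by
    have h2 : (x + b) / P = (y + ((m : ℝ) * P + m)) / (P * P) := by
      rw [h]; congr 1
      · push_cast; ring
      · rw [pow_add]
    rw [div_eq_div_iff (ne_of_gt hP0) (by positivity)] at h2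
    have := mul_right_cancel₀ (ne_of_gt hP0)
      (by linarith [h2] : (x + b) * P * P = (y + ((m : ℝ) * P + m)) * P)
    linarith [this]
  rcases Nat.lt_or_ge b m with hlt | hge
  · have hb' : (b : ℝ) + 1 ≤ m := by exact_mod_cast hlt
    have hm1 : (1 : ℝ) ≤ m := by
      have : 1 ≤ m := by omega
      exact_mod_cast this
    nlinarith [mul_le_mul_of_nonneg_right hb' hP0.le, mul_le_mul_of_nonneg_right hx1 hP0.le]
  · have hlt : m < b := lt_of_le_of_ne hge (Ne.symm hbm)
    have hb' : (m : ℝ) + 1 ≤ b := by exact_mod_cast hlt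
    have hPm : (m : ℝ) + 2 ≤ P := by
      have h3 : m + 2 ≤ N ^ n := by omega
      calc (m : ℝ) + 2 = ((m + 2 : ℕ) : ℝ) := by push_cast; ring
        _ ≤ ((N ^ n : ℕ) : ℝ) := by exact_mod_cast h3
        _ = P := by push_cast; ring
    nlinarith [mul_le_mul_of_nonneg_right hb' hP0.le, mul_nonneg hx0 hP0.le]

/-- For any words 𝐢, 𝐣 ∈ 𝒟ⁿ with 𝐣 ≠ 𝐢, the sets φ_𝐣(F) and φ_{𝐢𝐢}(F)
are disjoint, where F is the attractor of the GSC IFS. -/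
theorem stmt2 (N : ℕ) (hN : 2 ≤ N) (D : Finset (ℕ × ℕ))
    (hD : ∀ d ∈ D, d.1 < N ∧ d.2 < N)
    (F : Set (ℝ × ℝ)) (hFne : F.Nonempty) (hFc : IsCompact F)
    (hFattr : F = ⋃ d ∈ D, phi N d '' F)
    (n : ℕ) (hn : 1 ≤ n)
    (I J : List (ℕ × ℕ)) (hIlen : I.length = n) (hImem : ∀ d ∈ I, d ∈ D)
    (hJlen : J.length = n) (hJmem : ∀ d ∈ J, d ∈ D) (hne : J ≠ I) :
    Disjoint (phiWord N J '' F) (phiWord N (I ++ I) '' F) := by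
  have hNne : (N : ℝ) ≠ 0 := by positivity
  have hbound := F_bound N hN D hD F hFne hFc hFattr
  have hIDig : ∀ d ∈ I, d.1 < N ∧ d.2 < N := fun d hd => hD d (hImem d hd)
  have hJDig : ∀ d ∈ J, d.1 < N ∧ d.2 < N := fun d hd => hD d (hJmem d hd)
  rw [Set.disjoint_left]
  rintro z ⟨x, hx, hzx⟩ ⟨y, hy, hzy⟩
  obtain ⟨hx0, hx1, hx0', hx1'⟩ := hbound x hx
  obtain ⟨hy0, hy1, hy0', hy1'⟩ := hbound y hy
  set b1 := valN N (J.map Prod.fst) with hb1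
  set b2 := valN N (J.map Prod.snd) with hb2
  set m1 := valN N (I.map Prod.fst) with hm1
  set m2 := valN N (I.map Prod.snd) with hm2
  have hvals : b1 ≠ m1 ∨ b2 ≠ m2 := by
    by_contra hcon
    push_neg at hcon
    exact hne (words_eq N J I (by omega) hJDig hIDig hcon.1 hcon.2)
  have hb1lt : b1 < N ^ n := by
    have := valN_lt N (J.map Prod.fst) (by
      intro e he; obtain ⟨p, hp, rfl⟩ := List.mem_map.mp he; exact (hJDig p hp).1)
    rwa [List.length_map, hJlen] at this
  have hb2lt : b2 < N ^ n := by
    have := valN_lt N (J.map Prod.snd) (by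
      intro e he; obtain ⟨p, hp, rfl⟩ := List.mem_map.mp he; exact (hJDig p hp).2)
    rwa [List.length_map, hJlen] at this
  have hm1lt : m1 < N ^ n := by
    have := valN_lt N (I.map Prod.fst) (by
      intro e he; obtain ⟨p, hp, rfl⟩ := List.mem_map.mp he; exact (hIDig p hp).1)
    rwa [List.length_map, hIlen] at this
  have hm2lt : m2 < N ^ n := by
    have := valN_lt N (I.map Prod.snd) (by
      intro e he; obtain ⟨p, hp, rfl⟩ := List.mem_map.mp he; exact (hIDig p hp).2)
    rwa [List.length_map, hIlen] at this
  rw [phiWord_apply N hNne] at hzx hzy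
  have hIIl : (I ++ I).length = n + n := by simp [hIlen]
  have hII1 : valN N ((I ++ I).map Prod.fst) = m1 * N ^ n + m1 := by
    rw [List.map_append, valN_append, List.length_map, hIlen, hm1]
  have hII2 : valN N ((I ++ I).map Prod.snd) = m2 * N ^ n + m2 := by
    rw [List.map_append, valN_append, List.length_map, hIlen, hm2]
  rw [hJlen] at hzx
  rw [hIIl, hII1, hII2] at hzy
  rcases hvals with hv | hv
  · have h1 : (x.1 + b1) / (N : ℝ) ^ n = (y.1 + (m1 * N ^ n + m1 : ℕ)) / (N : ℝ) ^ (n + n) := by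
      have e1 : z.1 = (x.1 + b1) / (N : ℝ) ^ n := by rw [← hzx]
      have e2 : z.1 = (y.1 + (m1 * N ^ n + m1 : ℕ)) / (N : ℝ) ^ (n + n) := by rw [← hzy]
      rw [← e1, ← e2]
    exact key N n hN b1 m1 hb1lt hm1lt hv x.1 y.1 hx0 hx1 hy0 hy1 h1
  · have h2 : (x.2 + b2) / (N : ℝ) ^ n = (y.2 + (m2 * N ^ n + m2 : ℕ)) / (N : ℝ) ^ (n + n) := by
      have e1 : z.2 = (x.2 + b2) / (N : ℝ) ^ n := by rw [← hzx]
      have e2 : z.2 = (y.2 + (m2 * N ^ n + m2 : ℕ)) / (N : ℝ) ^ (n + n) := by rw [← hzy]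
      rw [← e1, ← e2]
    exact key N n hN b2 m2 hb2lt hm2lt hv x.2 y.2 hx0' hx1' hy0' hy1' h2
end

section
/- With the GSC setup: let n ≥ 1, 𝐢 ∈ 𝒟ⁿ, and k ≥ 2. Then for every word 𝐣 ∈ 𝒟^{(k−1)n} with 𝐣 ≠ 𝐢^{k−1}, the sets φ_𝐣(F) and φ_{𝐢^k}(F) are disjoint, where 𝐢^k denotes 𝐢 concatenated with itself k times. -/
/-- The k-fold concatenation 𝐢^k of a word 𝐢. -/
def wordPow (I : List (ℕ × ℕ)) (k : ℕ) : List (ℕ × ℕ) :=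
  (List.replicate k I).flatten

lemma phiWord_nil (N : ℕ) : phiWord N [] = id := rfl

lemma phiWord_cons (N : ℕ) (d : ℕ × ℕ) (l : List (ℕ × ℕ)) :
    phiWord N (d :: l) = phi N d ∘ phiWord N l := rfl

lemma phiWord_append (N : ℕ) (a b : List (ℕ × ℕ)) :
    phiWord N (a ++ b) = phiWord N a ∘ phiWord N b := by
  induction a with
  | nil => simp [phiWord_nil]
  | cons x l ih => simp [phiWord_cons, ih, Function.comp_assoc]

lemma phi_inj (N : ℕ) (hN : 2 ≤ N) (d : ℕ × ℕ) : Function.Injective (phi N d) := by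
  have hN' : (N : ℝ) ≠ 0 := by
    have : (0 : ℝ) < N := by exact_mod_cast Nat.lt_of_lt_of_le (by norm_num) hN
    linarith
  intro x y h
  rw [Prod.ext_iff] at h ⊢
  obtain ⟨h1, h2⟩ := h
  simp only [phi] at h1 h2
  constructor
  · field_simp at h1; linarith
  · field_simp at h2; linarith

lemma phiWord_inj (N : ℕ) (hN : 2 ≤ N) (w : List (ℕ × ℕ)) :
    Function.Injective (phiWord N w) := by
  induction w with
  | nil => exact fun x y h => h
  | cons d l ih => exact (phi_inj N hN d).comp ih

lemma wordPow_succ (I : List (ℕ × ℕ)) (k : ℕ) :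
    wordPow I (k + 1) = I ++ wordPow I k := by
  simp [wordPow, List.replicate_succ]

lemma wordPow_one (I : List (ℕ × ℕ)) : wordPow I 1 = I := by
  simp [wordPow]

lemma wordPow_two (I : List (ℕ × ℕ)) : wordPow I 2 = I ++ I := by
  rw [show (2 : ℕ) = 1 + 1 from rfl, wordPow_succ, wordPow_one]

lemma mem_wordPow {I : List (ℕ × ℕ)} {m : ℕ} {d : ℕ × ℕ}
    (h : d ∈ wordPow I m) : d ∈ I := by
  induction m with
  | zero => simp [wordPow] at h
  | succ m ih =>
    rw [wordPow_succ] at h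
    rcases List.mem_append.mp h with h | h
    · exact h
    · exact ih h

lemma phi_maps (N : ℕ) (D : Finset (ℕ × ℕ)) (F : Set (ℝ × ℝ))
    (hFattr : F = ⋃ d ∈ D, phi N d '' F) (d : ℕ × ℕ) (hd : d ∈ D) :
    phi N d '' F ⊆ F := by
  intro x hx
  rw [hFattr]
  exact Set.mem_biUnion hd hx

lemma phiWord_maps (N : ℕ) (D : Finset (ℕ × ℕ)) (F : Set (ℝ × ℝ))
    (hFattr : F = ⋃ d ∈ D, phi N d '' F) (w : List (ℕ × ℕ))
    (hw : ∀ d ∈ w, d ∈ D) : phiWord N w '' F ⊆ F := by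
  induction w with
  | nil => simp [phiWord_nil]
  | cons d l ih =>
    rw [phiWord_cons, Set.image_comp]
    exact (Set.image_mono (f := _) (ih (fun e he => hw e (List.mem_cons_of_mem _ he)))).trans
      (phi_maps N D F hFattr d (hw d List.mem_cons_self))

/-- Let 𝐢 ∈ 𝒟ⁿ and k ≥ 2. Then for every word 𝐣 ∈ 𝒟^{(k−1)n} with 𝐣 ≠ 𝐢^{k−1},
the sets φ_𝐣(F) and φ_{𝐢^k}(F) are disjoint. (The base case
φ_𝐣(F) ∩ φ_{𝐢𝐢}(F) = ∅ for 𝐣 ∈ 𝒟ⁿ \ {𝐢} is assumed as known.) -/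
theorem stmt4 (N : ℕ) (hN : 2 ≤ N) (D : Finset (ℕ × ℕ))
    (hD : ∀ d ∈ D, d.1 < N ∧ d.2 < N)
    (F : Set (ℝ × ℝ)) (hFne : F.Nonempty) (hFc : IsCompact F)
    (hFattr : F = ⋃ d ∈ D, phi N d '' F)
    (n : ℕ) (hn : 1 ≤ n)
    (I : List (ℕ × ℕ)) (hIlen : I.length = n) (hImem : ∀ d ∈ I, d ∈ D)
    (base : ∀ J : List (ℕ × ℕ), J.length = n → (∀ d ∈ J, d ∈ D) → J ≠ I →
      Disjoint (phiWord N J '' F) (phiWord N (I ++ I) '' F))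
    (k : ℕ) (hk : 2 ≤ k) :
    ∀ J : List (ℕ × ℕ), J.length = (k - 1) * n → (∀ d ∈ J, d ∈ D) →
      J ≠ wordPow I (k - 1) →
      Disjoint (phiWord N J '' F) (phiWord N (wordPow I k) '' F) := by
  induction k, hk using Nat.le_induction with
  | base =>
    intro J hJlen hJmem hne
    rw [wordPow_one] at hne
    rw [wordPow_two]
    exact base J (by simpa using hJlen) hJmem hne
  | succ k hk IH =>
    intro J hJlen hJmem hne
    simp only [Nat.add_sub_cancel] at hJlen hne
    have hkm : k - 1 + 1 = k := by omega
    have hn_le : n ≤ J.length := by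
      rw [hJlen]
      exact Nat.le_mul_of_pos_left n (show 0 < k by omega)
    set J₁ := J.take n with hJ₁
    set J₂ := J.drop n with hJ₂
    have hsplit : J = J₁ ++ J₂ := (List.take_append_drop n J).symm
    have hJ₁len : J₁.length = n := by
      rw [hJ₁, List.length_take]; omega
    have hJ₂len : J₂.length = (k - 1) * n := by
      rw [hJ₂, List.length_drop, hJlen, Nat.sub_mul, one_mul]
    have hJ₁mem : ∀ d ∈ J₁, d ∈ D := fun d hd =>
      hJmem d (by rw [hsplit]; exact List.mem_append_left _ hd)
    have hJ₂mem : ∀ d ∈ J₂, d ∈ D := fun d hd =>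
      hJmem d (by rw [hsplit]; exact List.mem_append_right _ hd)
    by_cases hc : J₁ = I
    · have hne2 : J₂ ≠ wordPow I (k - 1) := by
        intro h
        apply hne
        rw [hsplit, hc, h, ← wordPow_succ, hkm]
      have hdisj := IH J₂ hJ₂len hJ₂mem hne2
      rw [hsplit, hc, phiWord_append, wordPow_succ, phiWord_append,
        Set.image_comp, Set.image_comp]
      exact (Set.disjoint_image_iff (phiWord_inj N hN I)).mpr hdisj
    · have hbase := base J₁ hJ₁len hJ₁mem hc
      have h1 : phiWord N J '' F ⊆ phiWord N J₁ '' F := by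
        rw [hsplit, phiWord_append, Set.image_comp]
        exact Set.image_mono (f := _) (phiWord_maps N D F hFattr J₂ hJ₂mem)
      have h2 : phiWord N (wordPow I (k + 1)) '' F ⊆ phiWord N (I ++ I) '' F := by
        have heq : wordPow I (k + 1) = (I ++ I) ++ wordPow I (k - 1) := by
          rw [wordPow_succ, ← hkm, wordPow_succ, List.append_assoc, hkm]
        rw [heq, phiWord_append, Set.image_comp]
        exact Set.image_mono (f := _) (phiWord_maps N D F hFattr _
          (fun d hd => hImem d (mem_wordPow hd)))
      exact hbase.mono h1 h2
end

section
/- Let F be a connected GSC. For any x ∈ F, no connected component of F \ {x} is a singleton. -/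
open scoped NNReal ENNReal

lemma phi_lipschitz (N : ℕ) (hN : 0 < N) (d : ℕ × ℕ) :
    LipschitzWith (N : ℝ≥0)⁻¹ (phi N d) := by
  have hN' : (0:ℝ) < N := by exact_mod_cast hN
  apply LipschitzWith.of_dist_le_mul
  intro a b
  have h1 : (a.1 + d.1)/N - (b.1 + d.1)/N = (a.1 - b.1)/N := by ring
  have h2 : (a.2 + d.2)/N - (b.2 + d.2)/N = (a.2 - b.2)/N := by ring
  simp only [phi, Prod.dist_eq, Real.dist_eq, h1, h2, abs_div,
    abs_of_pos hN']
  rw [max_div_div_right hN'.le]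
  have : ((((N:ℝ≥0)⁻¹ : ℝ≥0)) : ℝ) = (N:ℝ)⁻¹ := by
    push_cast; ring
  rw [this, inv_mul_eq_div]

lemma phi_injective (N : ℕ) (hN : 0 < N) (d : ℕ × ℕ) :
    Function.Injective (phi N d) := by
  intro a b h
  have hN' : (0:ℝ) ≠ N := by positivity
  simp only [phi, Prod.ext_iff] at h ⊢
  obtain ⟨h1, h2⟩ := h
  rw [div_eq_div_iff (by positivity) (by positivity)] at h1 h2
  have hNne : ((N:ℝ)) ≠ 0 := by exact_mod_cast hN.ne'
  constructor
  · have := mul_right_cancel₀ hNne h1; linarith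
  · have := mul_right_cancel₀ hNne h2; linarith

lemma cells (N : ℕ) (hN : 2 ≤ N) (D : Finset (ℕ × ℕ))
    (F : Set (ℝ × ℝ)) (hFattr : F = ⋃ d ∈ D, phi N d '' F)
    (hFconn : IsConnected F) (hFnt : F.Nontrivial) :
    ∀ k : ℕ, ∀ y ∈ F, ∃ S : Set (ℝ × ℝ), S ⊆ F ∧ IsConnected S ∧ y ∈ S ∧
      S.Nontrivial ∧ EMetric.diam S ≤ EMetric.diam F * ((N : ℝ≥0∞)⁻¹) ^ k := by
  have hN0 : 0 < N := by omega
  intro k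
  induction k with
  | zero =>
    intro y hy
    exact ⟨F, le_refl _, hFconn, hy, hFnt, by simp⟩
  | succ k ih =>
    intro y hy
    rw [hFattr] at hy
    simp only [Set.mem_iUnion] at hy
    obtain ⟨d, hd, z, hz, hzy⟩ := hy
    obtain ⟨S, hSF, hSconn, hzS, hSnt, hSdiam⟩ := ih z hz
    refine ⟨phi N d '' S, ?_, ?_, ⟨z, hzS, hzy⟩, ?_, ?_⟩
    · intro w hw
      obtain ⟨a, ha, rfl⟩ := hw
      rw [hFattr]
      exact Set.mem_iUnion.2 ⟨d, Set.mem_iUnion.2 ⟨hd, ⟨a, hSF ha, rfl⟩⟩⟩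
    · exact hSconn.image _ ((phi_lipschitz N hN0 d).continuous.continuousOn)
    · obtain ⟨a, ha, b, hb, hab⟩ := hSnt
      exact ⟨phi N d a, ⟨a, ha, rfl⟩, phi N d b, ⟨b, hb, rfl⟩,
        fun h => hab (phi_injective N hN0 d h)⟩
    · calc EMetric.diam (phi N d '' S)
          ≤ ((N : ℝ≥0)⁻¹ : ℝ≥0) * EMetric.diam S :=
            (phi_lipschitz N hN0 d).ediam_image_le S
        _ ≤ (N : ℝ≥0∞)⁻¹ * (EMetric.diam F * ((N : ℝ≥0∞)⁻¹) ^ k) := by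
            rw [ENNReal.coe_inv (by exact_mod_cast hN0.ne')]
            push_cast
            exact mul_le_mul_right hSdiam _
        _ = EMetric.diam F * ((N : ℝ≥0∞)⁻¹) ^ (k + 1) := by ring

lemma F_nontrivial (N : ℕ) (hN : 2 ≤ N) (D : Finset (ℕ × ℕ))
    (hDcard : 1 < D.card) (F : Set (ℝ × ℝ)) (hFne : F.Nonempty)
    (hFattr : F = ⋃ d ∈ D, phi N d '' F) : F.Nontrivial := by
  by_contra h
  rw [Set.not_nontrivial_iff] at h
  obtain ⟨p, hp⟩ := hFne
  have hFp : F = {p} := Set.eq_singleton_iff_unique_mem.2 ⟨hp, fun q hq => h hq hp⟩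
  have hfix : ∀ d ∈ D, phi N d p = p := by
    intro d hd
    have : phi N d p ∈ F := by
      rw [hFattr]
      exact Set.mem_iUnion.2 ⟨d, Set.mem_iUnion.2 ⟨hd, ⟨p, hp, rfl⟩⟩⟩
    rw [hFp] at this
    exact this
  obtain ⟨d1, hd1, d2, hd2, hne⟩ := Finset.one_lt_card.1 hDcard
  have h1 := hfix d1 hd1
  have h2 := hfix d2 hd2
  have hN' : (0:ℝ) < N := by positivity
  simp only [phi, Prod.ext_iff] at h1 h2
  apply hne
  have e1 : (d1.1 : ℝ) = d2.1 := by
    have a1 := h1.1; have a2 := h2.1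
    rw [div_eq_iff hN'.ne'] at a1 a2
    linarith
  have e2 : (d1.2 : ℝ) = d2.2 := by
    have a1 := h1.2; have a2 := h2.2
    rw [div_eq_iff hN'.ne'] at a1 a2
    linarith
  exact Prod.ext (by exact_mod_cast e1) (by exact_mod_cast e2)

/-- For a connected GSC F and any x ∈ F, no connected component of F \ {x}
is a singleton. -/
theorem stmt6 (N : ℕ) (hN : 2 ≤ N) (D : Finset (ℕ × ℕ))
    (hD : ∀ d ∈ D, d.1 < N ∧ d.2 < N) (hDcard : 1 < D.card ∧ D.card < N ^ 2)
    (F : Set (ℝ × ℝ)) (hFne : F.Nonempty) (hFc : IsCompact F)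
    (hFattr : F = ⋃ d ∈ D, phi N d '' F) (hFconn : IsConnected F)
    (x : ℝ × ℝ) (hx : x ∈ F) :
    ∀ y ∈ F \ {x}, connectedComponentIn (F \ {x}) y ≠ {y} := by
  intro y hy heq
  obtain ⟨hyF, hyx⟩ := hy
  have hyx' : y ≠ x := hyx
  have hnt := F_nontrivial N hN D hDcard.1 F hFne hFattr
  have hdiam : EMetric.diam F ≠ ⊤ := hFc.isBounded.ediam_ne_top
  have hε : (0 : ℝ≥0∞) < edist y x := by
    rw [edist_pos]; exact hyx'
  -- find k with diam F * (N⁻¹)^k < edist y x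
  have hinv : (N : ℝ≥0∞)⁻¹ < 1 := by
    rw [ENNReal.inv_lt_one]
    exact_mod_cast (by omega : 1 < N)
  have htend : Filter.Tendsto (fun k : ℕ => EMetric.diam F * ((N : ℝ≥0∞)⁻¹) ^ k)
      Filter.atTop (nhds 0) := by
    have h0 := ENNReal.tendsto_pow_atTop_nhds_zero_of_lt_one hinv
    have := ENNReal.Tendsto.const_mul h0 (Or.inr hdiam)
    simpa using this
  obtain ⟨k, hk⟩ := (htend.eventually_lt_const hε).exists
  obtain ⟨S, hSF, hSconn, hyS, hSnt, hSdiam⟩ :=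
    cells N hN D F hFattr hFconn hnt k y hyF
  have hxS : x ∉ S := by
    intro hxS
    have : edist y x ≤ EMetric.diam S := EMetric.edist_le_diam_of_mem hyS hxS
    exact absurd (this.trans_lt (hSdiam.trans_lt hk)) (lt_irrefl _)
  have hsub : S ⊆ F \ {x} := fun w hw => ⟨hSF hw, fun hwx => hxS (hwx ▸ hw)⟩
  have hcomp : S ⊆ connectedComponentIn (F \ {x}) y :=
    hSconn.isPreconnected.subset_connectedComponentIn hyS hsub
  rw [heq] at hcomp
  obtain ⟨a, ha, b, hb, hab⟩ := hSnt
  exact hab ((hcomp ha).trans (hcomp hb).symm)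
end

section
/- Let F be a connected GSC and x ∈ F. Then the topological space F \ {x} is locally path-connected; consequently its connected components coincide with its path-connected components. -/
/-- iterated map for a word -/
noncomputable def cmap (N : ℕ) (w : List (ℕ × ℕ)) (z : ℝ × ℝ) : ℝ × ℝ :=
  w.foldr (phi N) z

lemma cmap_nil (N : ℕ) (z : ℝ × ℝ) : cmap N [] z = z := rfl
lemma cmap_cons (N : ℕ) (d : ℕ × ℕ) (w : List (ℕ × ℕ)) (z : ℝ × ℝ) :
    cmap N (d :: w) z = phi N d (cmap N w z) := rfl
lemma cmap_append (N : ℕ) (w : List (ℕ × ℕ)) (d : ℕ × ℕ) (z : ℝ × ℝ) :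
    cmap N (w ++ [d]) z = cmap N w (phi N d z) := by
  simp [cmap, List.foldr_append]

lemma phi_continuous (N : ℕ) (d : ℕ × ℕ) : Continuous (phi N d) := by
  unfold phi; fun_prop

lemma cmap_continuous (N : ℕ) (w : List (ℕ × ℕ)) : Continuous (cmap N w) := by
  induction w with
  | nil => exact continuous_id
  | cons d w ih => exact (phi_continuous N d).comp ih

lemma phi_dist (N : ℕ) (hN : 0 < N) (d : ℕ × ℕ) (a b : ℝ × ℝ) :
    dist (phi N d a) (phi N d b) = dist a b / N := by
  have hN' : (0:ℝ) < N := by exact_mod_cast hN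
  simp only [phi, Prod.dist_eq, Real.dist_eq]
  rw [div_sub_div_same, div_sub_div_same, abs_div, abs_div,
    abs_of_pos hN', ← max_div_div_right (le_of_lt hN')]
  ring_nf

lemma cmap_dist (N : ℕ) (hN : 0 < N) (w : List (ℕ × ℕ)) (a b : ℝ × ℝ) :
    dist (cmap N w a) (cmap N w b) = dist a b / N ^ w.length := by
  induction w with
  | nil => simp [cmap]
  | cons d w ih =>
    rw [cmap_cons, cmap_cons, phi_dist N hN, ih, List.length_cons, pow_succ, div_div]

lemma cmap_injective (N : ℕ) (hN : 0 < N) (w : List (ℕ × ℕ)) :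
    Function.Injective (cmap N w) := by
  intro a b h
  have := cmap_dist N hN w a b
  rw [h, dist_self] at this
  have hpow : (0:ℝ) < (N:ℝ) ^ w.length := by positivity
  field_simp at this
  exact dist_eq_zero.mp (by linarith)

section Cells

variable {N : ℕ} {D : Finset (ℕ × ℕ)} {F : Set (ℝ × ℝ)}

/-- a valid word -/
def Wd (D : Finset (ℕ × ℕ)) (w : List (ℕ × ℕ)) : Prop := ∀ d ∈ w, d ∈ D

lemma phi_image_subset (hFattr : F = ⋃ d ∈ D, phi N d '' F) {d : ℕ × ℕ} (hd : d ∈ D) :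
    phi N d '' F ⊆ F := by
  conv_rhs => rw [hFattr]
  exact Set.subset_biUnion_of_mem (u := fun d => phi N d '' F) hd

lemma cell_subset (hFattr : F = ⋃ d ∈ D, phi N d '' F) {w : List (ℕ × ℕ)} (hw : Wd D w) :
    cmap N w '' F ⊆ F := by
  induction w with
  | nil => rintro _ ⟨q, hq, rfl⟩; exact hq
  | cons d w ih =>
    have h1 : cmap N (d :: w) '' F = phi N d '' (cmap N w '' F) := by
      rw [Set.image_image]; rfl
    rw [h1]
    refine subset_trans ?_ (phi_image_subset hFattr (hw d (by simp)))
    exact Set.image_mono (ih (fun e he => hw e (by simp [he])))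

lemma cell_append_eq (N : ℕ) (w : List (ℕ × ℕ)) (d : ℕ × ℕ) :
    cmap N (w ++ [d]) '' F = cmap N w '' (phi N d '' F) := by
  rw [Set.image_image]
  exact Set.image_congr fun z _ => cmap_append N w d z

lemma cell_append_subset (hFattr : F = ⋃ d ∈ D, phi N d '' F) (w : List (ℕ × ℕ))
    {d : ℕ × ℕ} (hd : d ∈ D) :
    cmap N (w ++ [d]) '' F ⊆ cmap N w '' F := by
  rw [cell_append_eq]
  exact Set.image_mono (phi_image_subset hFattr hd)

lemma exists_word (hFattr : F = ⋃ d ∈ D, phi N d '' F) (n : ℕ) :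
    ∀ p ∈ F, ∃ w : List (ℕ × ℕ), w.length = n ∧ Wd D w ∧ p ∈ cmap N w '' F := by
  induction n with
  | zero => exact fun p hp => ⟨[], rfl, by simp [Wd], by simpa [cmap] using hp⟩
  | succ n ih =>
    intro p hp
    rw [hFattr] at hp
    simp only [Set.mem_iUnion] at hp
    obtain ⟨d, hd, q, hq, rfl⟩ := hp
    obtain ⟨w, hlen, hwd, hmem⟩ := ih q hq
    refine ⟨d :: w, by simp [hlen], ?_, ?_⟩
    · intro e he
      rcases List.mem_cons.mp he with h | h
      · exact h ▸ hd
      · exact hwd e h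
    · have : cmap N (d :: w) '' F = phi N d '' (cmap N w '' F) := by
        rw [Set.image_image]; rfl
      rw [this]
      exact Set.mem_image_of_mem _ hmem

lemma cell_dist (hN : 0 < N) (hFb : Bornology.IsBounded F) {w : List (ℕ × ℕ)}
    {p q : ℝ × ℝ} (hp : p ∈ cmap N w '' F) (hq : q ∈ cmap N w '' F) :
    dist p q ≤ Metric.diam F / N ^ w.length := by
  obtain ⟨a, ha, rfl⟩ := hp
  obtain ⟨b, hb, rfl⟩ := hq
  rw [cmap_dist N hN]
  have hpow : (0:ℝ) < (N:ℝ) ^ w.length := by positivity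
  gcongr
  exact Metric.dist_le_diam_of_mem hFb ha hb
  
end Cells

section Chains

variable {N : ℕ} {D : Finset (ℕ × ℕ)} {F : Set (ℝ × ℝ)}

/-- adjacency of first-level cells -/
def Adj (N : ℕ) (D : Finset (ℕ × ℕ)) (F : Set (ℝ × ℝ)) (d d' : ℕ × ℕ) : Prop :=
  d ∈ D ∧ d' ∈ D ∧ ((phi N d '' F) ∩ (phi N d' '' F)).Nonempty

lemma reachable (hFne : F.Nonempty) (hFc : IsCompact F)
    (hFattr : F = ⋃ d ∈ D, phi N d '' F) (hFconn : IsConnected F)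
    {da : ℕ × ℕ} (hda : da ∈ D) {db : ℕ × ℕ} (hdb : db ∈ D) :
    Relation.ReflTransGen (Adj N D F) da db := by
  by_contra hnot
  set S : Set (ℕ × ℕ) := {e | e ∈ D ∧ Relation.ReflTransGen (Adj N D F) da e} with hS
  have hSsub : S ⊆ (D : Set (ℕ × ℕ)) := fun e he => he.1
  have hSfin : S.Finite := D.finite_toSet.subset hSsub
  have hTfin : ({e | e ∈ D ∧ e ∉ S} : Set (ℕ × ℕ)).Finite :=
    D.finite_toSet.subset fun e he => he.1
  set A : Set (ℝ × ℝ) := ⋃ e ∈ S, phi N e '' F with hA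
  set B : Set (ℝ × ℝ) := ⋃ e ∈ {e | e ∈ D ∧ e ∉ S}, phi N e '' F with hB
  have hcell_closed : ∀ e : ℕ × ℕ, IsClosed (phi N e '' F) :=
    fun e => (hFc.image (phi_continuous N e)).isClosed
  have hAc : IsClosed A := hSfin.isClosed_biUnion fun e _ => hcell_closed e
  have hBc : IsClosed B := hTfin.isClosed_biUnion fun e _ => hcell_closed e
  have hdisj : ∀ z, z ∈ A → z ∈ B → False := by
    intro z hzA hzB
    simp only [hA, hB, Set.mem_iUnion] at hzA hzB
    obtain ⟨e1, he1, hz1⟩ := hzA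
    obtain ⟨e2, he2, hz2⟩ := hzB
    exact he2.2 ⟨he2.1, he1.2.tail ⟨he1.1, he2.1, ⟨z, hz1, hz2⟩⟩⟩
  have hcover : F ⊆ A ∪ B := by
    intro z hz
    rw [hFattr] at hz
    simp only [Set.mem_iUnion] at hz
    obtain ⟨e, he, hze⟩ := hz
    by_cases heS : e ∈ S
    · exact Or.inl (Set.mem_biUnion heS hze)
    · exact Or.inr (Set.mem_biUnion ⟨he, heS⟩ hze)
  obtain ⟨p0, hp0⟩ := hFne
  have haA : ∃ z ∈ F, z ∈ A := by
    refine ⟨phi N da p0, phi_image_subset hFattr hda ⟨p0, hp0, rfl⟩, ?_⟩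
    exact Set.mem_biUnion ⟨hda, Relation.ReflTransGen.refl⟩ ⟨p0, hp0, rfl⟩
  have hbB : ∃ z ∈ F, z ∈ B := by
    refine ⟨phi N db p0, phi_image_subset hFattr hdb ⟨p0, hp0, rfl⟩, ?_⟩
    exact Set.mem_biUnion ⟨hdb, fun h => hnot h.2⟩ ⟨p0, hp0, rfl⟩
  obtain ⟨za, hzaF, hzaA⟩ := haA
  obtain ⟨zb, hzbF, hzbB⟩ := hbB
  have := hFconn.isPreconnected Bᶜ Aᶜ hBc.isOpen_compl hAc.isOpen_compl
    (fun z hz => by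
      by_cases hzA : z ∈ A
      · exact Or.inl fun hzB => hdisj z hzA hzB
      · exact Or.inr hzA)
    ⟨za, hzaF, fun h => hdisj za hzaA h⟩
    ⟨zb, hzbF, fun h => hdisj zb h hzbB⟩
  obtain ⟨z, hzF, hzB, hzA⟩ := this
  rcases hcover hzF with h | h
  · exact hzA h
  · exact hzB h

lemma walk_of_rtg {r : (ℕ × ℕ) → (ℕ × ℕ) → Prop} {d d' : ℕ × ℕ}
    (h : Relation.ReflTransGen r d d') :
    ∃ (k : ℕ) (e : ℕ → ℕ × ℕ), e 0 = d ∧ e k = d' ∧ ∀ i < k, r (e i) (e (i + 1)) := by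
  induction h with
  | refl => exact ⟨0, fun _ => d, rfl, rfl, fun i hi => absurd hi (Nat.not_lt_zero i)⟩
  | @tail c d'' hcd hr ih =>
    obtain ⟨k, e, he0, hek, hstep⟩ := ih
    refine ⟨k + 1, fun i => if i = k + 1 then d'' else e i, by simp [he0], by simp, ?_⟩
    intro i hi
    rcases Nat.lt_succ_iff_lt_or_eq.mp hi with h | h
    · have h1 : i ≠ k + 1 := by omega
      have h2 : i + 1 ≠ k + 1 := by omega
      show r (if i = k + 1 then d'' else e i) (if i + 1 = k + 1 then d'' else e (i + 1))
      rw [if_neg h1, if_neg h2]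
      exact hstep i h
    · have h1 : i ≠ k + 1 := by omega
      simp only []
      rw [if_neg h1, if_pos (by omega : i + 1 = k + 1), h, hek]
      exact hr

end Chains

section ChainExists

variable {N : ℕ} {D : Finset (ℕ × ℕ)} {F : Set (ℝ × ℝ)}

lemma chain_exists (hFne : F.Nonempty) (hFc : IsCompact F)
    (hFattr : F = ⋃ d ∈ D, phi N d '' F) (hFconn : IsConnected F) :
    ∃ K : ℕ, 0 < K ∧ ∀ a ∈ F, ∀ b ∈ F, ∃ (e : ℕ → ℕ × ℕ) (q : ℕ → ℝ × ℝ),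
      q 0 = a ∧ q K = b ∧
      (∀ i < K, e i ∈ D ∧ q i ∈ phi N (e i) '' F ∧ q (i + 1) ∈ phi N (e i) '' F) ∧
      (a = b → ∀ i, q i = a) := by
  -- choose a walk length for each pair
  have hwalk : ∀ p : (ℕ × ℕ) × (ℕ × ℕ), ∃ k : ℕ,
      p.1 ∈ D → p.2 ∈ D → ∃ e : ℕ → ℕ × ℕ, e 0 = p.1 ∧ e k = p.2 ∧
        ∀ i < k, Adj N D F (e i) (e (i + 1)) := by
    intro p
    by_cases h : p.1 ∈ D ∧ p.2 ∈ D
    · obtain ⟨k, e, h0, hk, hs⟩ := walk_of_rtg (reachable hFne hFc hFattr hFconn h.1 h.2)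
      exact ⟨k, fun _ _ => ⟨e, h0, hk, hs⟩⟩
    · exact ⟨0, fun h1 h2 => absurd ⟨h1, h2⟩ h⟩
  choose kf hkf using hwalk
  set K : ℕ := (D ×ˢ D).sup kf + 1 with hK
  refine ⟨K, Nat.succ_pos _, ?_⟩
  intro a ha b hb
  -- find first-level cells containing a and b
  have hmem : ∀ z ∈ F, ∃ d ∈ D, z ∈ phi N d '' F := by
    intro z hz
    rw [hFattr] at hz
    simpa using hz
  obtain ⟨da, hda, hada⟩ := hmem a ha
  obtain ⟨db, hdb, hbdb⟩ := hmem b hb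
  by_cases hab : a = b
  · subst hab
    exact ⟨fun _ => da, fun _ => a, rfl, rfl,
      fun i _ => ⟨hda, hada, hada⟩, fun _ _ => rfl⟩
  · obtain ⟨e₀, he0', hek', hstep⟩ := hkf (da, db) hda hdb
    set k : ℕ := kf (da, db) with hk
    have he0 : e₀ 0 = da := he0'
    have hek : e₀ k = db := hek'
    have hkK : k ≤ K - 1 := Finset.le_sup (f := kf) (Finset.mk_mem_product hda hdb)
    have hkK' : k < K := by omega
    -- vertices of the walk are in D
    have hvD : ∀ i, i ≤ k → e₀ i ∈ D := by
      intro i hi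
      rcases Nat.lt_or_ge i k with h | h
      · exact (hstep i h).1
      · have : i = k := by omega
        rw [this, hek]; exact hdb
    -- intermediate points
    have hmid : ∀ j : ℕ, ∃ z : ℝ × ℝ,
        j < k → z ∈ phi N (e₀ j) '' F ∧ z ∈ phi N (e₀ (j + 1)) '' F := by
      intro j
      by_cases hj : j < k
      · obtain ⟨z, hz1, hz2⟩ := (hstep j hj).2.2
        exact ⟨z, fun _ => ⟨hz1, hz2⟩⟩
      · exact ⟨a, fun h => absurd h hj⟩
    choose pt hpt using hmid
    -- the padded chain
    refine ⟨fun i => if i < k then e₀ i else db,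
      fun i => if i = 0 then a else if i ≤ k then pt (i - 1) else b, if_pos rfl, ?_, ?_, ?_⟩
    · -- q K = b
      have h1 : K ≠ 0 := by omega
      have h2 : ¬ K ≤ k := by omega
      simp [h1, h2]
    · intro i hi
      refine ⟨?_, ?_, ?_⟩
      · by_cases h : i < k
        · simpa [h] using hvD i (le_of_lt h)
        · simpa [h] using hdb
      · -- q i ∈ cell (e i)
        by_cases h0 : i = 0
        · subst h0
          by_cases h : 0 < k
          · simpa [h, he0] using hada
          · have hk0 : k = 0 := by omega
            have : db = da := by rw [← he0, ← hek, hk0]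
            simpa [h, this] using hada
        · by_cases h : i ≤ k
          · have hik : i - 1 < k := by omega
            have h2 := (hpt (i - 1) hik).2
            have h3 : i - 1 + 1 = i := by omega
            rw [h3] at h2
            by_cases h4 : i < k
            · simpa [h0, h, h4] using h2
            · have h5 : i = k := by omega
              have h6 : e₀ i = db := by rw [h5, hek]
              rw [h6] at h2
              simpa [h0, h, h4] using h2
          · simpa [h0, h, not_lt_of_ge (by omega : k ≤ i)] using hbdb
      · -- q (i+1) ∈ cell (e i)
        by_cases h : i + 1 ≤ k
        · have h1 := (hpt i (by omega)).1
          simpa [Nat.succ_ne_zero, h, (by omega : i < k)] using h1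
        · by_cases h2 : i < k
          · omega
          · simpa [Nat.succ_ne_zero, h, h2] using hbdb
    · exact fun h => absurd h hab

end ChainExists

section Recursion

variable {N : ℕ} {D : Finset (ℕ × ℕ)} {F : Set (ℝ × ℝ)}

/-- invariant for the approximating chains at level n -/
def ChainInv (N : ℕ) (D : Finset (ℕ × ℕ)) (F : Set (ℝ × ℝ)) (K : ℕ) (x y : ℝ × ℝ) (n : ℕ)
    (P : ℕ → ℝ × ℝ) (C : ℕ → List (ℕ × ℕ)) : Prop :=
  (∀ j, (C j).length = n ∧ Wd D (C j)) ∧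
  (∀ j, P j ∈ cmap N (C j) '' F ∧ P (j + 1) ∈ cmap N (C j) '' F) ∧
  P 0 = x ∧ (∀ j, K ^ n ≤ j → P j = y)

lemma refine_cell (hN : 0 < N) {K : ℕ}
    (hchain : ∀ a ∈ F, ∀ b ∈ F, ∃ (e : ℕ → ℕ × ℕ) (q : ℕ → ℝ × ℝ),
      q 0 = a ∧ q K = b ∧
      (∀ i < K, e i ∈ D ∧ q i ∈ phi N (e i) '' F ∧ q (i + 1) ∈ phi N (e i) '' F) ∧
      (a = b → ∀ i, q i = a))
    {w : List (ℕ × ℕ)} {a b : ℝ × ℝ}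
    (ha : a ∈ cmap N w '' F) (hb : b ∈ cmap N w '' F) :
    ∃ (e : ℕ → ℕ × ℕ) (q : ℕ → ℝ × ℝ), q 0 = a ∧ q K = b ∧
      (∀ i < K, e i ∈ D ∧ q i ∈ cmap N (w ++ [e i]) '' F ∧
        q (i + 1) ∈ cmap N (w ++ [e i]) '' F) ∧
      (a = b → ∀ i, q i = a) := by
  obtain ⟨a₀, ha₀, rfl⟩ := ha
  obtain ⟨b₀, hb₀, rfl⟩ := hb
  obtain ⟨e, q₀, hq0, hqK, hmid, hconst⟩ := hchain a₀ ha₀ b₀ hb₀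
  refine ⟨e, fun i => cmap N w (q₀ i), by simp only [hq0], by simp only [hqK], ?_, ?_⟩
  · intro i hi
    obtain ⟨heD, h1, h2⟩ := hmid i hi
    exact ⟨heD, by rw [cell_append_eq]; exact Set.mem_image_of_mem _ h1,
      by rw [cell_append_eq]; exact Set.mem_image_of_mem _ h2⟩
  · intro hab i
    have h0 : a₀ = b₀ := cmap_injective N hN w hab
    simp only [hconst h0 i]

lemma step_lemma (hN : 0 < N) (hFattr : F = ⋃ d ∈ D, phi N d '' F)
    {K : ℕ} (hK : 0 < K)
    (hchain : ∀ a ∈ F, ∀ b ∈ F, ∃ (e : ℕ → ℕ × ℕ) (q : ℕ → ℝ × ℝ),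
      q 0 = a ∧ q K = b ∧
      (∀ i < K, e i ∈ D ∧ q i ∈ phi N (e i) '' F ∧ q (i + 1) ∈ phi N (e i) '' F) ∧
      (a = b → ∀ i, q i = a))
    {x y : ℝ × ℝ} (n : ℕ) (P : ℕ → ℝ × ℝ) (C : ℕ → List (ℕ × ℕ))
    (hInv : ChainInv N D F K x y n P C) :
    ∃ (P' : ℕ → ℝ × ℝ) (C' : ℕ → List (ℕ × ℕ)),
      ChainInv N D F K x y (n + 1) P' C' ∧ ∀ m, P' m ∈ cmap N (C (m / K)) '' F := by
  obtain ⟨hlen, hmem, hP0, hPy⟩ := hInv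
  have href : ∀ j : ℕ, ∃ (e : ℕ → ℕ × ℕ) (q : ℕ → ℝ × ℝ),
      q 0 = P j ∧ q K = P (j + 1) ∧
      (∀ i < K, e i ∈ D ∧ q i ∈ cmap N (C j ++ [e i]) '' F ∧
        q (i + 1) ∈ cmap N (C j ++ [e i]) '' F) ∧
      (P j = P (j + 1) → ∀ i, q i = P j) :=
    fun j => refine_cell hN hchain (hmem j).1 (hmem j).2
  choose e q hq0 hqK hmid hconst using href
  refine ⟨fun m => q (m / K) (m % K), fun m => C (m / K) ++ [e (m / K) (m % K)], ?_, ?_⟩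
  · have hmodlt : ∀ m : ℕ, m % K < K := fun m => Nat.mod_lt m hK
    refine ⟨?_, ?_, ?_, ?_⟩
    · intro m
      constructor
      · simp [(hlen (m / K)).1]
      · intro d hd
        rcases List.mem_append.mp hd with h | h
        · exact (hlen (m / K)).2 d h
        · rw [List.mem_singleton.mp h]
          exact (hmid (m / K) (m % K) (hmodlt m)).1
    · intro m
      constructor
      · exact (hmid (m / K) (m % K) (hmodlt m)).2.1
      · -- P' (m+1) ∈ cell (C' m)
        simp only []
        by_cases hcase : m % K + 1 < K
        · have hdiv : (m + 1) / K = m / K := by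
            conv_lhs => rw [← Nat.div_add_mod m K]
            rw [Nat.add_assoc, Nat.mul_add_div hK, Nat.div_eq_of_lt hcase, Nat.add_zero]
          have hmod : (m + 1) % K = m % K + 1 := by
            conv_lhs => rw [← Nat.div_add_mod m K]
            rw [Nat.add_assoc, Nat.mul_add_mod, Nat.mod_eq_of_lt hcase]
          rw [hdiv, hmod]
          exact (hmid (m / K) (m % K) (hmodlt m)).2.2
        · have hKeq : m % K + 1 = K := by have := hmodlt m; omega
          have hdiv : (m + 1) / K = m / K + 1 := by
            conv_lhs => rw [← Nat.div_add_mod m K]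
            rw [Nat.add_assoc, hKeq, ← Nat.mul_succ, Nat.mul_div_cancel_left _ hK]
          have hmod : (m + 1) % K = 0 := by
            conv_lhs => rw [← Nat.div_add_mod m K]
            rw [Nat.add_assoc, hKeq, ← Nat.mul_succ, Nat.mul_mod_right]
          rw [hdiv, hmod, hq0, ← hqK]
          have := (hmid (m / K) (m % K) (hmodlt m)).2.2
          rwa [hKeq] at this
    · simp only []
      rw [Nat.zero_div, Nat.zero_mod, hq0, hP0]
    · intro m hm
      have hj : K ^ n ≤ m / K := by
        rw [Nat.le_div_iff_mul_le hK]
        calc K ^ n * K = K ^ (n + 1) := by rw [pow_succ]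
        _ ≤ m := hm
      have h1 : P (m / K) = y := hPy _ hj
      have h2 : P (m / K + 1) = y := hPy _ (by omega)
      have := hconst (m / K) (by rw [h1, h2]) (m % K)
      simp only []
      rw [this, h1]
  · intro m
    have h := (hmid (m / K) (m % K) (Nat.mod_lt m hK)).2.1
    exact cell_append_subset hFattr _ (hmid (m / K) (m % K) (Nat.mod_lt m hK)).1 h

/-- simple dependent recursion helper -/
noncomputable def seqAux (T : ℕ → Sort*) (t0 : T 0) (f : ∀ n, T n → T (n + 1)) : ∀ n, T n :=
  fun n => Nat.rec t0 f n

lemma seqAux_zero (T : ℕ → Sort*) (t0 : T 0) (f : ∀ n, T n → T (n + 1)) :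
    seqAux T t0 f 0 = t0 := rfl

lemma seqAux_succ (T : ℕ → Sort*) (t0 : T 0) (f : ∀ n, T n → T (n + 1)) (n : ℕ) :
    seqAux T t0 f (n + 1) = f n (seqAux T t0 f n) := rfl

end Recursion

section Main

variable {N : ℕ} {D : Finset (ℕ × ℕ)} {F : Set (ℝ × ℝ)}

theorem gsc_isPathConnected (hN : 2 ≤ N) (hFne : F.Nonempty) (hFc : IsCompact F)
    (hFattr : F = ⋃ d ∈ D, phi N d '' F) (hFconn : IsConnected F) :
    IsPathConnected F := by
  have hN0 : 0 < N := by omega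
  have hNR : (1:ℝ) < (N:ℝ) := by exact_mod_cast (by omega : 1 < N)
  obtain ⟨K, hK, hchain⟩ := chain_exists hFne hFc hFattr hFconn
  obtain ⟨x0, hx0⟩ := hFne
  have cellnil : cmap N ([] : List (ℕ × ℕ)) '' F = F := by
    ext z; simp [cmap]
  refine ⟨x0, hx0, ?_⟩
  intro y hy
  -- base data
  set P0 : ℕ → ℝ × ℝ := fun j => if j = 0 then x0 else y with hP0def
  set C0 : ℕ → List (ℕ × ℕ) := fun _ => ([] : List (ℕ × ℕ)) with hC0def
  have inv0 : ChainInv N D F K x0 y 0 P0 C0 := by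
    refine ⟨fun j => ⟨rfl, by intro d hd; exact absurd hd List.not_mem_nil⟩, ?_, by simp [hP0def], ?_⟩
    · intro j
      constructor
      · rw [hC0def, cellnil]
        by_cases h : j = 0 <;> simp [hP0def, h, hx0, hy]
      · rw [hC0def, cellnil]
        simp [hP0def, hy]
    · intro j hj
      have : j ≠ 0 := by simpa using Nat.one_le_iff_ne_zero.mp hj
      simp [hP0def, this]
  -- the recursive sequence of chains
  set T : ℕ → Type := fun n =>
    {pc : (ℕ → ℝ × ℝ) × (ℕ → List (ℕ × ℕ)) // ChainInv N D F K x0 y n pc.1 pc.2} with hT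
  have hstep : ∀ n, ∀ t : T n, ∃ t' : T (n + 1),
      ∀ m, t'.1.1 m ∈ cmap N (t.1.2 (m / K)) '' F := by
    intro n t
    obtain ⟨P', C', hInv', hrel⟩ := step_lemma hN0 hFattr hK hchain n t.1.1 t.1.2 t.2
    exact ⟨⟨(P', C'), hInv'⟩, hrel⟩
  choose f hf using hstep
  set sq : ∀ n, T n := seqAux T ⟨(P0, C0), inv0⟩ f with hsq
  set P : ℕ → ℕ → ℝ × ℝ := fun n => (sq n).1.1 with hPdef
  set Cw : ℕ → ℕ → List (ℕ × ℕ) := fun n => (sq n).1.2 with hCdef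
  have hInv : ∀ n, ChainInv N D F K x0 y n (P n) (Cw n) := fun n => (sq n).2
  have hrel : ∀ n m, P (n + 1) m ∈ cmap N (Cw n (m / K)) '' F := fun n m => hf n (sq n) m
  -- lengths
  have hlen : ∀ n j, (Cw n j).length = n := fun n j => ((hInv n).1 j).1
  have hmemF : ∀ n j, P n j ∈ F := by
    intro n j
    exact cell_subset hFattr ((hInv n).1 j).2 ((hInv n).2.1 j).1
  -- the discrete approximations
  set g : ℕ → ℝ → ℝ × ℝ := fun n t => P n ⌊t * (K : ℝ) ^ n⌋₊ with hgdef
  set Δ : ℝ := Metric.diam F with hΔ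
  have hΔ0 : 0 ≤ Δ := Metric.diam_nonneg
  have hFb : Bornology.IsBounded F := hFc.isBounded
  set rr : ℝ := (N : ℝ)⁻¹ with hrr
  have hrr0 : 0 ≤ rr := by positivity
  have hrr1 : rr < 1 := by
    rw [hrr, inv_lt_one_iff₀]; right; exact hNR
  have hdivpow : ∀ n : ℕ, Δ / (N : ℝ) ^ n = Δ * rr ^ n := by
    intro n; rw [hrr, div_eq_mul_inv, inv_pow]
  -- (A) g n t lies in the cell of index ⌊t K^n⌋
  have hgmem : ∀ n (t : ℝ), g n t ∈ cmap N (Cw n ⌊t * (K : ℝ) ^ n⌋₊) '' F :=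
    fun n t => ((hInv n).2.1 _).1
  -- (B) floor compatibility
  have hfloor : ∀ (t : ℝ) (n : ℕ), ⌊t * (K : ℝ) ^ (n + 1)⌋₊ / K = ⌊t * (K : ℝ) ^ n⌋₊ := by
    intro t n
    rw [← Nat.floor_div_natCast]
    congr 1
    rw [pow_succ]
    field_simp
  -- (i) consecutive approximations are close
  have hconsec : ∀ n (t : ℝ), dist (g n t) (g (n + 1) t) ≤ Δ * rr ^ n := by
    intro n t
    have h1 : g (n + 1) t ∈ cmap N (Cw n ⌊t * (K : ℝ) ^ n⌋₊) '' F := by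
      have := hrel n ⌊t * (K : ℝ) ^ (n + 1)⌋₊
      rwa [hfloor t n] at this
    have h2 := cell_dist hN0 hFb (hgmem n t) h1
    rwa [hlen, hdivpow] at h2
  -- (ii) modulus of continuity of g n
  have hmod : ∀ n (s t : ℝ), s ≤ t → t - s ≤ ((K : ℝ) ^ n)⁻¹ →
      dist (g n s) (g n t) ≤ Δ * rr ^ n := by
    intro n s t hst hd
    have hKpow : (0:ℝ) < (K : ℝ) ^ n := by positivity
    set u := s * (K : ℝ) ^ n with hu
    set v := t * (K : ℝ) ^ n with hv
    have huv : u ≤ v := by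
      apply mul_le_mul_of_nonneg_right hst (le_of_lt hKpow)
    have hv1 : v ≤ u + 1 := by
      have h3 : (t - s) * (K : ℝ) ^ n ≤ 1 := by
        have h5 := mul_le_mul_of_nonneg_right hd (le_of_lt hKpow)
        rwa [inv_mul_cancel₀ (ne_of_gt hKpow)] at h5
      have h4 : v - u = (t - s) * (K : ℝ) ^ n := by rw [hu, hv]; ring
      linarith
    have hj1 : ⌊u⌋₊ ≤ ⌊v⌋₊ := Nat.floor_le_floor huv
    have hj2 : ⌊v⌋₊ ≤ ⌊u⌋₊ + 1 := by
      by_cases h0 : 0 ≤ u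
      · calc ⌊v⌋₊ ≤ ⌊u + 1⌋₊ := Nat.floor_le_floor hv1
        _ = ⌊u⌋₊ + 1 := Nat.floor_add_one h0
      · have : v ≤ 1 := by nlinarith
        calc ⌊v⌋₊ ≤ ⌊(1:ℝ)⌋₊ := Nat.floor_le_floor this
        _ = 1 := Nat.floor_one
        _ ≤ ⌊u⌋₊ + 1 := by omega
    rcases Nat.eq_or_lt_of_le hj1 with heq | hlt
    · rw [hgdef]
      simp only []
      rw [← hu, ← hv, ← heq, dist_self]
      exact by positivity
    · have hveq : ⌊v⌋₊ = ⌊u⌋₊ + 1 := by omega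
      rw [hgdef]
      simp only []
      rw [← hu, ← hv, hveq]
      have h2 := cell_dist hN0 hFb ((hInv n).2.1 ⌊u⌋₊).1 ((hInv n).2.1 ⌊u⌋₊).2
      rwa [hlen, hdivpow] at h2
  -- (iii) uniform limit
  have hcauchy : ∀ t : ℝ, CauchySeq (fun n => g n t) :=
    fun t => cauchySeq_of_le_geometric rr Δ hrr1 (fun n => hconsec n t)
  choose h hlim using fun t => cauchySeq_tendsto_of_complete (hcauchy t)
  have hdistlim : ∀ (t : ℝ) n, dist (g n t) (h t) ≤ Δ * rr ^ n / (1 - rr) :=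
    fun t n => dist_le_of_le_geometric_of_tendsto rr Δ hrr1 (fun n => hconsec n t) (hlim t) n
  set Cst : ℝ := Δ / (1 - rr) with hCst
  have hCst0 : 0 ≤ Cst := by
    apply div_nonneg hΔ0; linarith
  have hdistlim' : ∀ (t : ℝ) n, dist (g n t) (h t) ≤ Cst * rr ^ n := by
    intro t n
    calc dist (g n t) (h t) ≤ Δ * rr ^ n / (1 - rr) := hdistlim t n
    _ = Cst * rr ^ n := by rw [hCst]; ring
  have hrrpos : 0 < rr := by
    rw [hrr]; positivity
  have hKR : (0:ℝ) < (K : ℝ) := by exact_mod_cast hK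
  -- symmetric modulus
  have hmod' : ∀ n (s t : ℝ), dist s t ≤ ((K : ℝ) ^ n)⁻¹ →
      dist (g n s) (g n t) ≤ Δ * rr ^ n := by
    intro n s t hd
    rcases le_total s t with hst | hst
    · refine hmod n s t hst ?_
      rw [Real.dist_eq, abs_sub_comm, abs_of_nonneg (by linarith)] at hd
      exact hd
    · rw [dist_comm]
      refine hmod n t s hst ?_
      rw [Real.dist_eq, abs_of_nonneg (by linarith)] at hd
      exact hd
  -- h is continuous
  have hcont : Continuous h := by
    rw [Metric.continuous_iff]
    intro t ε hε
    have htend : Filter.Tendsto (fun n : ℕ => (2 * Cst + Δ + 1) * rr ^ n)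
        Filter.atTop (nhds 0) := by
      simpa using (tendsto_pow_atTop_nhds_zero_of_lt_one hrr0 hrr1).const_mul
        (2 * Cst + Δ + 1)
    obtain ⟨n, hn⟩ := (htend.eventually_lt_const hε).exists
    refine ⟨((K : ℝ) ^ n)⁻¹, by positivity, ?_⟩
    intro s hs
    have h1 : dist (h s) (h t) ≤ Cst * rr ^ n + (Δ * rr ^ n + Cst * rr ^ n) := by
      calc dist (h s) (h t) ≤ dist (h s) (g n s) + dist (g n s) (h t) := dist_triangle _ _ _
      _ ≤ dist (h s) (g n s) + (dist (g n s) (g n t) + dist (g n t) (h t)) := by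
          have := dist_triangle (g n s) (g n t) (h t)
          linarith
      _ ≤ Cst * rr ^ n + (Δ * rr ^ n + Cst * rr ^ n) := by
          have e1 : dist (h s) (g n s) ≤ Cst * rr ^ n := by
            rw [dist_comm]; exact hdistlim' s n
          have e2 : dist (g n s) (g n t) ≤ Δ * rr ^ n := hmod' n s t (le_of_lt hs)
          have e3 : dist (g n t) (h t) ≤ Cst * rr ^ n := hdistlim' t n
          linarith
    have h2 : (0:ℝ) < rr ^ n := by positivity
    calc dist (h s) (h t) ≤ Cst * rr ^ n + (Δ * rr ^ n + Cst * rr ^ n) := h1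
    _ < (2 * Cst + Δ + 1) * rr ^ n := by nlinarith
    _ < ε := hn
  -- endpoints and membership
  have hg0 : ∀ n, g n 0 = x0 := by
    intro n
    have : (0:ℝ) * (K : ℝ) ^ n = 0 := by ring
    rw [hgdef]
    simp only []
    rw [this, Nat.floor_zero]
    exact (hInv n).2.2.1
  have hg1 : ∀ n, g n 1 = y := by
    intro n
    have h1 : (1:ℝ) * (K : ℝ) ^ n = ((K ^ n : ℕ) : ℝ) := by push_cast; ring
    rw [hgdef]
    simp only []
    rw [h1, Nat.floor_natCast]
    exact (hInv n).2.2.2 (K ^ n) le_rfl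
  have hstart : h 0 = x0 := by
    have := hlim 0
    rw [show (fun n => g n 0) = fun _ : ℕ => x0 from funext hg0] at this
    exact tendsto_nhds_unique this tendsto_const_nhds
  have hend : h 1 = y := by
    have := hlim 1
    rw [show (fun n => g n 1) = fun _ : ℕ => y from funext hg1] at this
    exact tendsto_nhds_unique this tendsto_const_nhds
  have hmemf : ∀ t : ℝ, h t ∈ F := by
    intro t
    exact hFc.isClosed.mem_of_tendsto (hlim t)
      (Filter.Eventually.of_forall fun n => hmemF n _)
  exact ⟨⟨⟨fun t => h ↑t, hcont.comp continuous_subtype_val⟩,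
      by simp [hstart], by simp [hend]⟩, fun t => hmemf ↑t⟩

end Main

section Finale

variable {N : ℕ} {D : Finset (ℕ × ℕ)} {F : Set (ℝ × ℝ)}

lemma words_finite (D : Finset (ℕ × ℕ)) (n : ℕ) :
    {w : List (ℕ × ℕ) | w.length = n ∧ Wd D w}.Finite := by
  induction n with
  | zero =>
    apply Set.Finite.subset (Set.finite_singleton ([] : List (ℕ × ℕ)))
    intro w hw
    simp only [Set.mem_singleton_iff]
    exact List.length_eq_zero_iff.mp hw.1
  | succ n ih =>
    have : {w : List (ℕ × ℕ) | w.length = n + 1 ∧ Wd D w} ⊆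
        (fun p : (ℕ × ℕ) × List (ℕ × ℕ) => p.1 :: p.2) ''
          ((D : Set (ℕ × ℕ)) ×ˢ {w | w.length = n ∧ Wd D w}) := by
      intro w hw
      match w, hw with
      | d :: w', hw =>
        refine ⟨(d, w'), ⟨hw.2 d (by simp), ?_, ?_⟩, rfl⟩
        · simpa using hw.1
        · exact fun e he => hw.2 e (by simp [he])
    exact Set.Finite.subset ((D.finite_toSet.prod ih).image _) this

lemma isPathConnected_preimage_coe {s V : Set (ℝ × ℝ)} (hV : IsPathConnected V)
    (hVs : V ⊆ s) : IsPathConnected ((↑) ⁻¹' V : Set s) := by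
  obtain ⟨z, hz, hjoin⟩ := hV
  refine ⟨⟨z, hVs hz⟩, hz, ?_⟩
  intro p hp
  obtain ⟨γ, hγ⟩ := hjoin hp
  exact ⟨⟨⟨fun t => ⟨γ t, hVs (hγ t)⟩,
      Continuous.subtype_mk γ.continuous _⟩,
      Subtype.ext γ.source, Subtype.ext γ.target⟩, fun t => hγ t⟩

/-- the union of level-n cells containing z is path-connected, small,
and a neighborhood of z within F -/
lemma nbhd_structure (hN : 2 ≤ N) (hFne : F.Nonempty) (hFc : IsCompact F)
    (hFattr : F = ⋃ d ∈ D, phi N d '' F) (hFconn : IsConnected F)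
    {z : ℝ × ℝ} (hz : z ∈ F) (n : ℕ) :
    ∃ V : Set (ℝ × ℝ), IsPathConnected V ∧ V ⊆ F ∧
      (∀ p ∈ V, dist p z ≤ Metric.diam F / (N : ℝ) ^ n) ∧
      (∃ O : Set (ℝ × ℝ), IsOpen O ∧ z ∈ O ∧ F ∩ O ⊆ V) := by
  have hN0 : 0 < N := by omega
  have hpc : IsPathConnected F := gsc_isPathConnected hN hFne hFc hFattr hFconn
  set V : Set (ℝ × ℝ) :=
    ⋃ w ∈ {w : List (ℕ × ℕ) | w.length = n ∧ Wd D w ∧ z ∈ cmap N w '' F},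
      cmap N w '' F with hV
  obtain ⟨w₀, hw₀len, hw₀D, hw₀mem⟩ := exists_word hFattr n z hz
  have hzV : z ∈ V := Set.mem_biUnion ⟨hw₀len, hw₀D, hw₀mem⟩ hw₀mem
  refine ⟨V, ?_, ?_, ?_, ?_⟩
  · refine ⟨z, hzV, ?_⟩
    intro p hp
    simp only [hV, Set.mem_iUnion] at hp
    obtain ⟨w, ⟨hwlen, hwD, hwz⟩, hpw⟩ := hp
    have hjoin : JoinedIn (cmap N w '' F) z p :=
      (hpc.image (cmap_continuous N w)).joinedIn z hwz p hpw
    exact hjoin.mono (Set.subset_biUnion_of_mem (u := fun w => cmap N w '' F)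
      (⟨hwlen, hwD, hwz⟩ : _ ∈ {w : List (ℕ × ℕ) | w.length = n ∧ Wd D w ∧ z ∈ cmap N w '' F}))
  · intro p hp
    simp only [hV, Set.mem_iUnion] at hp
    obtain ⟨w, ⟨hwlen, hwD, hwz⟩, hpw⟩ := hp
    exact cell_subset hFattr hwD hpw
  · intro p hp
    simp only [hV, Set.mem_iUnion] at hp
    obtain ⟨w, ⟨hwlen, hwD, hwz⟩, hpw⟩ := hp
    have := cell_dist hN0 hFc.isBounded hpw hwz
    rwa [hwlen] at this
  · -- openness part
    set O : Set (ℝ × ℝ) :=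
      (⋃ w ∈ {w : List (ℕ × ℕ) | w.length = n ∧ Wd D w ∧ z ∉ cmap N w '' F},
        cmap N w '' F)ᶜ with hO
    have hOfin : {w : List (ℕ × ℕ) | w.length = n ∧ Wd D w ∧ z ∉ cmap N w '' F}.Finite :=
      (words_finite D n).subset fun w hw => ⟨hw.1, hw.2.1⟩
    refine ⟨O, ?_, ?_, ?_⟩
    · rw [hO]
      apply isOpen_compl_iff.mpr
      exact hOfin.isClosed_biUnion fun w _ =>
        ((hFc.image (cmap_continuous N w)).isClosed)
    · rw [hO]
      intro hmem
      simp only [Set.mem_iUnion] at hmem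
      obtain ⟨w, ⟨_, _, hznot⟩, hzw⟩ := hmem
      exact hznot hzw
    · rintro p ⟨hpF, hpO⟩
      simp only [hO, Set.mem_compl_iff] at hpO
      obtain ⟨w, hwlen, hwD, hpw⟩ := exists_word hFattr n p hpF
      by_cases hzw : z ∈ cmap N w '' F
      · exact Set.mem_biUnion ⟨hwlen, hwD, hzw⟩ hpw
      · exfalso
        apply hpO
        have hwmem : w ∈ {w : List (ℕ × ℕ) | w.length = n ∧ Wd D w ∧ z ∉ cmap N w '' F} :=
          ⟨hwlen, hwD, hzw⟩
        exact Set.mem_biUnion hwmem hpw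

end Finale

/-- For a connected GSC F and x ∈ F, the space F \ {x} is locally path-connected;
consequently connected components of F \ {x} coincide with path components. -/
theorem stmt7 (N : ℕ) (hN : 2 ≤ N) (D : Finset (ℕ × ℕ))
    (hD : ∀ d ∈ D, d.1 < N ∧ d.2 < N) (hDcard : 1 < D.card ∧ D.card < N ^ 2)
    (F : Set (ℝ × ℝ)) (hFne : F.Nonempty) (hFc : IsCompact F)
    (hFattr : F = ⋃ d ∈ D, phi N d '' F) (hFconn : IsConnected F)
    (x : ℝ × ℝ) (hx : x ∈ F) :
    LocPathConnectedSpace ↥(F \ {x}) ∧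
      ∀ y ∈ F \ {x},
        connectedComponentIn (F \ {x}) y = {z | JoinedIn (F \ {x}) y z} := by
  have hN0 : 0 < N := by omega
  have hNR : (1:ℝ) < (N:ℝ) := by exact_mod_cast (by omega : 1 < N)
  set Δ : ℝ := Metric.diam F with hΔ
  have hΔ0 : 0 ≤ Δ := Metric.diam_nonneg
  set rr : ℝ := (N : ℝ)⁻¹ with hrr
  have hrr0 : 0 ≤ rr := by positivity
  have hrr1 : rr < 1 := by rw [hrr, inv_lt_one_iff₀]; right; exact hNR
  have hdivpow : ∀ n : ℕ, Δ / (N : ℝ) ^ n = Δ * rr ^ n := by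
    intro n; rw [hrr, div_eq_mul_inv, inv_pow]
  have hloc : LocPathConnectedSpace ↥(F \ {x}) := by
    constructor
    intro y
    rw [Filter.hasBasis_self]
    intro t ht
    -- unpack the neighborhood
    rw [mem_nhds_subtype] at ht
    obtain ⟨u, hu, hut⟩ := ht
    obtain ⟨ε, hε, hball⟩ := Metric.mem_nhds_iff.mp hu
    have hyF : (y : ℝ × ℝ) ∈ F := y.2.1
    have hyx : (y : ℝ × ℝ) ≠ x := y.2.2
    have hdxy : 0 < dist x (y : ℝ × ℝ) := dist_pos.mpr (Ne.symm hyx)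
    -- choose a fine level n
    have htend : Filter.Tendsto (fun n : ℕ => Δ * rr ^ n) Filter.atTop (nhds 0) := by
      simpa using (tendsto_pow_atTop_nhds_zero_of_lt_one hrr0 hrr1).const_mul Δ
    obtain ⟨n, hn⟩ :=
      (htend.eventually_lt_const (lt_min hε hdxy)).exists
    obtain ⟨V, hVpc, hVF, hVdist, O, hOopen, hzO, hOV⟩ :=
      nbhd_structure hN hFne hFc hFattr hFconn hyF n
    have hVdist' : ∀ p ∈ V, dist p (y : ℝ × ℝ) ≤ Δ * rr ^ n := by
      intro p hp
      have := hVdist p hp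
      rwa [hdivpow] at this
    have hxV : x ∉ V := by
      intro hxV
      have := hVdist' x hxV
      have h2 := lt_of_lt_of_le (lt_min hε hdxy) (le_refl _)
      have h3 : dist x (y : ℝ × ℝ) ≤ Δ * rr ^ n := this
      have h4 : Δ * rr ^ n < dist x (y : ℝ × ℝ) := lt_of_lt_of_le hn (min_le_right _ _)
      linarith
    have hVsub : V ⊆ F \ {x} := by
      intro p hp
      refine ⟨hVF hp, ?_⟩
      intro hpx
      rw [Set.mem_singleton_iff] at hpx
      exact hxV (hpx ▸ hp)
    refine ⟨(↑) ⁻¹' V, ?_, isPathConnected_preimage_coe hVpc hVsub, ?_⟩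
    · -- preimage of V is a neighborhood of y
      rw [mem_nhds_subtype]
      refine ⟨O, hOopen.mem_nhds hzO, ?_⟩
      intro p hp
      exact hOV ⟨p.2.1, hp⟩
    · -- contained in t
      intro p hp
      apply hut
      apply hball
      rw [Metric.mem_ball]
      exact lt_of_le_of_lt (hVdist' _ hp) (lt_of_lt_of_le hn (min_le_left _ _))
  refine ⟨hloc, ?_⟩
  intro y hy
  haveI : LocallyPathConnectedSpace ↥(F \ {x}) := hloc
  rw [connectedComponentIn_eq_image hy,
    ← pathComponent_eq_connectedComponent (⟨y, hy⟩ : ↥(F \ {x}))]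
  ext z
  constructor
  · rintro ⟨z', hz', rfl⟩
    exact (joinedIn_iff_joined hy z'.2).mpr hz'
  · intro hz
    have hzmem : z ∈ F \ {x} := hz.target_mem
    exact ⟨⟨z, hzmem⟩, (joinedIn_iff_joined hy hzmem).mp hz, rfl⟩
end
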